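/- In LR-Subtraction Nim with any removable set S ⊆ ℤ≥2, if O_S(n) ∈ {R, P} then O_S(n-1), O_S(n+1) ∈ {L, P} (whenever n-1 ≥ 0). That is, whenever Right can win moving second from n, Left can win moving second from n+1 and n-1. -/
import Mathlib


open scoped Classical

inductive Outcome : Type
  | L | R | N | P
deriving DecidableEq

/-- Outcome determined from the set of outcomes of the options of a non-terminal position. -/
noncomputable def fromOptions (T : Set Outcome) : Outcome :=
  if Outcome.L ∈ T ∧ T ⊆ {Outcome.L, Outcome.N} then Outcome.L
  else if Outcome.R ∈ T ∧ T ⊆ {Outcome.R, Outcome.N} then Outcome.R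
  else if T = {Outcome.N} then Outcome.P
  else Outcome.N

/-- Outcome of Ending Partizan Subtraction Nim with removable set `S ⊆ ℤ≥2` and
terminal assignment `W`. -/
noncomputable def epOutcome (S : Set ℕ) (hS : ∀ s ∈ S, 2 ≤ s) (W : ℕ → Outcome) : ℕ → Outcome :=
  fun n => Nat.strongRecOn n (fun n ih =>
    if ∃ s ∈ S, s ≤ n then
      fromOptions {o | ∃ s, ∃ hs : s ∈ S, ∃ hsn : s ≤ n,
        o = ih (n - s) (by have := hS s hs; omega)}
    else W n)

/-- Outcome of `LR`-Subtraction Nim: at a terminal position, Left wins if the number of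
remaining tokens is even, Right wins if it is odd. -/
noncomputable def lrOutcome (S : Set ℕ) (hS : ∀ s ∈ S, 2 ≤ s) : ℕ → Outcome :=
  epOutcome S hS (fun n => if Even n then Outcome.L else Outcome.R)

lemma epOutcome_eq (S : Set ℕ) (hS : ∀ s ∈ S, 2 ≤ s) (W : ℕ → Outcome) (n : ℕ) :
    epOutcome S hS W n =
      if ∃ s ∈ S, s ≤ n then
        fromOptions {o | ∃ s, ∃ _ : s ∈ S, ∃ _ : s ≤ n, o = epOutcome S hS W (n - s)}
      else W n := by
  conv_lhs => rw [epOutcome]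
  rw [Nat.strongRecOn_eq]
  rfl

lemma fromOptions_eq_L {T : Set Outcome} (h1 : Outcome.L ∈ T)
    (h2 : T ⊆ {Outcome.L, Outcome.N}) : fromOptions T = Outcome.L := by
  rw [fromOptions, if_pos ⟨h1, h2⟩]

lemma fromOptions_eq_P {T : Set Outcome} (h : T = {Outcome.N}) :
    fromOptions T = Outcome.P := by
  subst h
  rw [fromOptions, if_neg, if_neg, if_pos rfl]
  · rintro ⟨h1, -⟩; simp at h1
  · rintro ⟨h1, -⟩; simp at h1

lemma of_fromOptions_eq_R {T : Set Outcome} (h : fromOptions T = Outcome.R) :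
    Outcome.R ∈ T ∧ T ⊆ {Outcome.R, Outcome.N} := by
  rw [fromOptions] at h
  split_ifs at h
  assumption

lemma of_fromOptions_eq_P {T : Set Outcome} (h : fromOptions T = Outcome.P) :
    T = {Outcome.N} := by
  rw [fromOptions] at h
  split_ifs at h
  assumption

section
variable (S : Set ℕ) (hS : ∀ s ∈ S, 2 ≤ s)

lemma lrOutcome_eq (n : ℕ) :
    lrOutcome S hS n =
      if ∃ s ∈ S, s ≤ n then
        fromOptions {o | ∃ s, ∃ _ : s ∈ S, ∃ _ : s ≤ n, o = lrOutcome S hS (n - s)}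
      else if Even n then Outcome.L else Outcome.R :=
  epOutcome_eq S hS _ n

lemma lrOutcome_zero : lrOutcome S hS 0 = Outcome.L := by
  rw [lrOutcome_eq]
  rw [if_neg, if_pos (by norm_num)]
  rintro ⟨s, hs, hs0⟩
  have := hS s hs; omega

lemma key (n : ℕ) :
    (lrOutcome S hS n = Outcome.R → lrOutcome S hS (n+1) = Outcome.L) ∧
    (lrOutcome S hS (n+1) = Outcome.R → lrOutcome S hS n = Outcome.L) ∧
    (lrOutcome S hS n = Outcome.P →
      lrOutcome S hS (n+1) = Outcome.L ∨ lrOutcome S hS (n+1) = Outcome.P) ∧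
    (lrOutcome S hS (n+1) = Outcome.P →
      lrOutcome S hS n = Outcome.L ∨ lrOutcome S hS n = Outcome.P) := by
  induction n using Nat.strong_induction_on with
  | _ n ih =>
  by_cases hn : ∃ s ∈ S, s ≤ n
  · -- n is non-terminal, hence so is n+1
    have hn1 : ∃ s ∈ S, s ≤ n + 1 := by
      obtain ⟨s, hs, hsn⟩ := hn; exact ⟨s, hs, by omega⟩
    have hOn : lrOutcome S hS n =
        fromOptions {o | ∃ s, ∃ _ : s ∈ S, ∃ _ : s ≤ n, o = lrOutcome S hS (n - s)} := by
      rw [lrOutcome_eq, if_pos hn]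
    have hOn1 : lrOutcome S hS (n+1) =
        fromOptions {o | ∃ s, ∃ _ : s ∈ S, ∃ _ : s ≤ n + 1, o = lrOutcome S hS (n + 1 - s)} := by
      rw [lrOutcome_eq, if_pos hn1]
    -- induction hypothesis applied to option pairs
    have pair : ∀ s ∈ S, s ≤ n →
        (lrOutcome S hS (n-s) = Outcome.R → lrOutcome S hS (n+1-s) = Outcome.L) ∧
        (lrOutcome S hS (n+1-s) = Outcome.R → lrOutcome S hS (n-s) = Outcome.L) ∧
        (lrOutcome S hS (n-s) = Outcome.P →
          lrOutcome S hS (n+1-s) = Outcome.L ∨ lrOutcome S hS (n+1-s) = Outcome.P) ∧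
        (lrOutcome S hS (n+1-s) = Outcome.P →
          lrOutcome S hS (n-s) = Outcome.L ∨ lrOutcome S hS (n-s) = Outcome.P) := by
      intro s hs hsn
      have h2 : 2 ≤ s := hS s hs
      have e : n + 1 - s = (n - s) + 1 := by omega
      rw [e]
      exact ih (n - s) (by omega)
    refine ⟨?_, ?_, ?_, ?_⟩
    · -- O n = R → O (n+1) = L
      intro h
      rw [hOn] at h
      obtain ⟨hRmem, hsub⟩ := of_fromOptions_eq_R h
      obtain ⟨s₀, hs₀, hs₀n, hR⟩ := hRmem
      rw [hOn1]
      apply fromOptions_eq_L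
      · exact ⟨s₀, hs₀, by omega, ((pair s₀ hs₀ hs₀n).1 hR.symm).symm⟩
      · rintro o ⟨s, hs, hsn1, rfl⟩
        by_cases hsn : s ≤ n
        · have hmem : lrOutcome S hS (n - s) ∈ ({Outcome.R, Outcome.N} : Set Outcome) :=
            hsub ⟨s, hs, hsn, rfl⟩
          simp only [Set.mem_insert_iff, Set.mem_singleton_iff] at hmem
          have hp := pair s hs hsn
          rcases hmem with hv | hv
          · simp only [hp.1 hv]; left; rfl
          · -- O(n-s) = N : show O(n+1-s) ∈ {L, N}
            rcases ho : lrOutcome S hS (n+1-s) with _ | _ | _ | _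
            · left; rfl
            · exact absurd (hp.2.1 ho) (by rw [hv]; decide)
            · right; rfl
            · rcases hp.2.2.2 ho with h' | h' <;> rw [hv] at h' <;> exact absurd h' (by decide)
        · have : s = n + 1 := by omega
          subst this
          simp only [Nat.sub_self, lrOutcome_zero]
          left; rfl
    · -- O (n+1) = R → O n = L
      intro h
      rw [hOn1] at h
      obtain ⟨hRmem, hsub⟩ := of_fromOptions_eq_R h
      obtain ⟨s₀, hs₀, hs₀n1, hR⟩ := hRmem
      have hs₀n : s₀ ≤ n := by
        by_contra hc
        have : s₀ = n + 1 := by omega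
        subst this
        rw [Nat.sub_self, lrOutcome_zero] at hR
        exact absurd hR (by decide)
      rw [hOn]
      apply fromOptions_eq_L
      · exact ⟨s₀, hs₀, hs₀n, ((pair s₀ hs₀ hs₀n).2.1 hR.symm).symm⟩
      · rintro o ⟨s, hs, hsn, rfl⟩
        have hmem : lrOutcome S hS (n + 1 - s) ∈ ({Outcome.R, Outcome.N} : Set Outcome) :=
          hsub ⟨s, hs, by omega, rfl⟩
        simp only [Set.mem_insert_iff, Set.mem_singleton_iff] at hmem
        have hp := pair s hs hsn
        rcases hmem with hv | hv
        · simp only [hp.2.1 hv]; left; rfl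
        · rcases ho : lrOutcome S hS (n-s) with _ | _ | _ | _
          · left; rfl
          · exact absurd (hp.1 ho) (by rw [hv]; decide)
          · right; rfl
          · rcases hp.2.2.1 ho with h' | h' <;> rw [hv] at h' <;> exact absurd h' (by decide)
    · -- O n = P → O (n+1) ∈ {L, P}
      intro h
      rw [hOn] at h
      have hTn := of_fromOptions_eq_P h
      -- every option of n has outcome N
      have hallN : ∀ s ∈ S, s ≤ n → lrOutcome S hS (n - s) = Outcome.N := by
        intro s hs hsn
        have : lrOutcome S hS (n - s) ∈ ({Outcome.N} : Set Outcome) := by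
          rw [← hTn]; exact ⟨s, hs, hsn, rfl⟩
        exact this
      have hsub1 : ∀ s ∈ S, s ≤ n + 1 →
          lrOutcome S hS (n+1-s) = Outcome.L ∨ lrOutcome S hS (n+1-s) = Outcome.N := by
        intro s hs hsn1
        by_cases hsn : s ≤ n
        · have hp := pair s hs hsn
          have hN := hallN s hs hsn
          rcases ho : lrOutcome S hS (n+1-s) with _ | _ | _ | _
          · left; rfl
          · exact absurd (hp.2.1 ho) (by rw [hN]; decide)
          · right; rfl
          · rcases hp.2.2.2 ho with h' | h' <;> rw [hN] at h' <;> exact absurd h' (by decide)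
        · have : s = n + 1 := by omega
          subst this
          rw [Nat.sub_self, lrOutcome_zero]; left; rfl
      by_cases hL : Outcome.L ∈
          {o | ∃ s, ∃ _ : s ∈ S, ∃ _ : s ≤ n + 1, o = lrOutcome S hS (n + 1 - s)}
      · left
        rw [hOn1]
        apply fromOptions_eq_L hL
        rintro o ⟨s, hs, hsn1, rfl⟩
        rcases hsub1 s hs hsn1 with h' | h' <;> rw [h']
        · left; rfl
        · right; rfl
      · right
        rw [hOn1]
        apply fromOptions_eq_P
        ext o
        simp only [Set.mem_singleton_iff]
        constructor
        · rintro ⟨s, hs, hsn1, rfl⟩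
          rcases hsub1 s hs hsn1 with h' | h'
          · exact absurd ⟨s, hs, hsn1, h'.symm⟩ hL
          · exact h'
        · rintro rfl
          obtain ⟨s, hs, hsn⟩ := hn
          have := hsub1 s hs (by omega)
          rcases this with h' | h'
          · exact absurd ⟨s, hs, by omega, h'.symm⟩ hL
          · exact ⟨s, hs, by omega, h'.symm⟩
    · -- O (n+1) = P → O n ∈ {L, P}
      intro h
      rw [hOn1] at h
      have hTn1 := of_fromOptions_eq_P h
      have hallN : ∀ s ∈ S, s ≤ n + 1 → lrOutcome S hS (n + 1 - s) = Outcome.N := by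
        intro s hs hsn
        have : lrOutcome S hS (n + 1 - s) ∈ ({Outcome.N} : Set Outcome) := by
          rw [← hTn1]; exact ⟨s, hs, hsn, rfl⟩
        exact this
      have hsub0 : ∀ s ∈ S, s ≤ n →
          lrOutcome S hS (n-s) = Outcome.L ∨ lrOutcome S hS (n-s) = Outcome.N := by
        intro s hs hsn
        have hp := pair s hs hsn
        have hN := hallN s hs (by omega)
        rcases ho : lrOutcome S hS (n-s) with _ | _ | _ | _
        · left; rfl
        · exact absurd (hp.1 ho) (by rw [hN]; decide)
        · right; rfl
        · rcases hp.2.2.1 ho with h' | h' <;> rw [hN] at h' <;> exact absurd h' (by decide)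
      by_cases hL : Outcome.L ∈
          {o | ∃ s, ∃ _ : s ∈ S, ∃ _ : s ≤ n, o = lrOutcome S hS (n - s)}
      · left
        rw [hOn]
        apply fromOptions_eq_L hL
        rintro o ⟨s, hs, hsn, rfl⟩
        rcases hsub0 s hs hsn with h' | h' <;> rw [h']
        · left; rfl
        · right; rfl
      · right
        rw [hOn]
        apply fromOptions_eq_P
        ext o
        simp only [Set.mem_singleton_iff]
        constructor
        · rintro ⟨s, hs, hsn, rfl⟩
          rcases hsub0 s hs hsn with h' | h'
          · exact absurd ⟨s, hs, hsn, h'.symm⟩ hL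
          · exact h'
        · rintro rfl
          obtain ⟨s, hs, hsn⟩ := hn
          rcases hsub0 s hs hsn with h' | h'
          · exact absurd ⟨s, hs, hsn, h'.symm⟩ hL
          · exact ⟨s, hs, hsn, h'.symm⟩
  · -- n terminal
    have hOn : lrOutcome S hS n = if Even n then Outcome.L else Outcome.R := by
      rw [lrOutcome_eq, if_neg hn]
    by_cases hn1 : ∃ s ∈ S, s ≤ n + 1
    · -- n+1 non-terminal: only move is s = n+1, to 0, so O(n+1) = L
      have hOn1 : lrOutcome S hS (n+1) = Outcome.L := by
        rw [lrOutcome_eq, if_pos hn1]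
        apply fromOptions_eq_L
        · obtain ⟨s, hs, hsn1⟩ := hn1
          have : s = n + 1 := by
            by_contra hc
            exact hn ⟨s, hs, by omega⟩
          subst this
          exact ⟨n+1, hs, le_refl _, by rw [Nat.sub_self, lrOutcome_zero]⟩
        · rintro o ⟨s, hs, hsn1, rfl⟩
          have : s = n + 1 := by
            by_contra hc
            exact hn ⟨s, hs, by omega⟩
          subst this
          rw [Nat.sub_self, lrOutcome_zero]; left; rfl
      refine ⟨fun _ => hOn1, ?_, fun _ => Or.inl hOn1, ?_⟩
      · intro h; rw [hOn1] at h; exact absurd h (by decide)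
      · intro h; rw [hOn1] at h; exact absurd h (by decide)
    · -- both terminal
      have hOn1 : lrOutcome S hS (n+1) = if Even (n+1) then Outcome.L else Outcome.R := by
        rw [lrOutcome_eq, if_neg hn1]
      rw [hOn, hOn1]
      by_cases he : Even n
      · rw [if_pos he, if_neg (by simp [Nat.even_add_one, he])]
        refine ⟨fun h => absurd h (by decide), fun _ => rfl,
          fun h => absurd h (by decide), fun h => absurd h (by decide)⟩
      · rw [if_neg he, if_pos (by simp [Nat.even_add_one, he])]
        refine ⟨fun _ => rfl, fun h => absurd h (by decide),
          fun h => absurd h (by decide), fun h => absurd h (by decide)⟩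

end

theorem stmt3 (S : Set ℕ) (hS : ∀ s ∈ S, 2 ≤ s) (n : ℕ)
    (h : lrOutcome S hS n = Outcome.R ∨ lrOutcome S hS n = Outcome.P) :
    (1 ≤ n → (lrOutcome S hS (n - 1) = Outcome.L ∨ lrOutcome S hS (n - 1) = Outcome.P)) ∧
    (lrOutcome S hS (n + 1) = Outcome.L ∨ lrOutcome S hS (n + 1) = Outcome.P) := by
  constructor
  · intro hn
    have e : n = (n - 1) + 1 := by omega
    have k := key S hS (n - 1)
    rw [← e] at k
    rcases h with h | h
    · exact Or.inl (k.2.1 h)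
    · exact k.2.2.2 h
  · have k := key S hS n
    rcases h with h | h
    · exact Or.inl (k.1 h)
    · exact k.2.2.1 h
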